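/- Let α, C > 0 and let f : (0,1]² → ℝ be integrable and mixed α-Hölder with constant C with respect to the dyadic metrics. For j, j' ∈ ℕ, 0 ≤ k < 2^j, 0 ≤ k' < 2^{j'}, let ψ^j_k and ψ^{j'}_{k'} be the (unnormalized) Haar functions equal to +1 on the right half and −1 on the left half of the dyadic intervals I^j_k and I^{j'}_{k'} respectively, and 0 elsewhere, and let ψ^{j,j'}_{k,k'}(x,x') = ψ^j_k(x) · ψ^{j'}_{k'}(x') be the tensor Haar function. Then |∫_{(0,1]²} f(x,x') ψ^{j,j'}_{k,k'}(x,x') dx dx'| ≤ C · 2^{-αj} · 2^{-αj'} · 2^{-(j+1)} · 2^{-(j'+1)}. -/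

import Mathlib

open MeasureTheory Set Filter

/-- The index `k` of the scale-`j` dyadic interval `(2^{-j} k, 2^{-j}(k+1)]` containing `x`. -/
noncomputable def dyadicIndex (j : ℕ) (x : ℝ) : ℤ := ⌈(2:ℝ) ^ j * x⌉ - 1

/-- The scale-`j` dyadic interval `I^j_k = (2^{-j} k, 2^{-j}(k+1)]`. -/
noncomputable def dyadicInterval (j : ℕ) (k : ℤ) : Set ℝ :=
  Set.Ioc ((2:ℝ) ^ (-(j:ℤ)) * k) ((2:ℝ) ^ (-(j:ℤ)) * (k + 1))

/-- The dyadic averaging operator `P^j`:  `(P^j f)(x) = 2^j ∫_{I^j_k} f`, where `I^j_k` is the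
scale-`j` dyadic interval containing `x`. -/
noncomputable def dyadicAvg (j : ℕ) (f : ℝ → ℝ) (x : ℝ) : ℝ :=
  (2:ℝ) ^ j * ∫ t in dyadicInterval j (dyadicIndex j x), f t

/-- The dyadic metric on `(0,1]`:
`d(x,y) = inf { 2^{-j} : x and y lie in the same scale-j dyadic interval }` for `x ≠ y`,
and `d(x,x) = 0`. -/
noncomputable def dyadicDist (x y : ℝ) : ℝ :=
  if x = y then 0
  else sInf {r : ℝ | ∃ j : ℕ, r = (2:ℝ) ^ (-(j:ℤ)) ∧ dyadicIndex j x = dyadicIndex j y}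

/-- `f` is `α`-Hölder with constant `C` on `(0,1]` with respect to the dyadic metric. -/
def HolderDyadic (α C : ℝ) (f : ℝ → ℝ) : Prop :=
  ∀ x ∈ Set.Ioc (0:ℝ) 1, ∀ y ∈ Set.Ioc (0:ℝ) 1, |f x - f y| ≤ C * dyadicDist x y ^ α

/-- `g` is mixed `α`-Hölder with constant `C` on `(0,1]²` with respect to the dyadic metrics. -/
def MixedHolderDyadic (α C : ℝ) (g : ℝ → ℝ → ℝ) : Prop :=
  ∀ x ∈ Set.Ioc (0:ℝ) 1, ∀ y ∈ Set.Ioc (0:ℝ) 1, ∀ x' ∈ Set.Ioc (0:ℝ) 1, ∀ y' ∈ Set.Ioc (0:ℝ) 1,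
    |g y x' - g x x'| ≤ C * dyadicDist x y ^ α ∧
    |g x y' - g x x'| ≤ C * dyadicDist x' y' ^ α ∧
    |g y y' - g x y' - g y x' + g x x'| ≤ C * (dyadicDist x y ^ α * dyadicDist x' y' ^ α)

/-- Dyadic averaging at scale `j` in the first variable. -/
noncomputable def avgFst (j : ℕ) (g : ℝ → ℝ → ℝ) (x x' : ℝ) : ℝ := dyadicAvg j (fun t => g t x') x

/-- Dyadic averaging at scale `j'` in the second variable. -/
noncomputable def avgSnd (j' : ℕ) (g : ℝ → ℝ → ℝ) (x x' : ℝ) : ℝ := dyadicAvg j' (fun t => g x t) x'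

/-- The double averaging operator `P^j P'^{j'}`. -/
noncomputable def avg2 (j j' : ℕ) (g : ℝ → ℝ → ℝ) : ℝ → ℝ → ℝ := avgFst j (avgSnd j' g)

/-- The mixed martingale difference `Δ_j Δ'_{j'} g`. -/
noncomputable def mixedDiff (j j' : ℕ) (g : ℝ → ℝ → ℝ) (x x' : ℝ) : ℝ :=
  avg2 (j+1) (j'+1) g x x' - avg2 j (j'+1) g x x' - avg2 (j+1) j' g x x' + avg2 j j' g x x'

/-- `Δ_j P'^{j'} g`: martingale difference in the first variable, average in the second. -/
noncomputable def diffFstAvgSnd (j j' : ℕ) (g : ℝ → ℝ → ℝ) (x x' : ℝ) : ℝ :=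
  avg2 (j+1) j' g x x' - avg2 j j' g x x'

/-- `P^j Δ'_{j'} g`: average in the first variable, martingale difference in the second. -/
noncomputable def avgFstDiffSnd (j j' : ℕ) (g : ℝ → ℝ → ℝ) (x x' : ℝ) : ℝ :=
  avg2 j (j'+1) g x x' - avg2 j j' g x x'

/-- The (unnormalized) Haar function `ψ^j_k`: `+1` on the right half of `I^j_k`, `-1` on its
left half, `0` elsewhere. -/
noncomputable def haarFn (j : ℕ) (k : ℤ) (x : ℝ) : ℝ :=
  if x ∈ Set.Ioc ((2:ℝ) ^ (-(j:ℤ)) * k + (2:ℝ) ^ (-(j:ℤ) - 1)) ((2:ℝ) ^ (-(j:ℤ)) * (k + 1)) then 1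
  else if x ∈ Set.Ioc ((2:ℝ) ^ (-(j:ℤ)) * k) ((2:ℝ) ^ (-(j:ℤ)) * k + (2:ℝ) ^ (-(j:ℤ) - 1)) then -1
  else 0

/-!
Write `h = 2^{-(j+1)}` for the half-length of `I^j_k`. The left half of `I^j_k` is the right
half translated by `-h`, so by translation invariance of Lebesgue measure integrating against
`ψ^j_k` in the first variable turns `f` into the difference `f(x, ·) - f(x - h, ·)` integrated
over the right half. Doing the same in the second variable leaves the integral, over the product
of the two right halves (of area `h h'`), of the mixed second difference
`f(x,x') - f(x-h,x') - f(x,x'-h') + f(x-h,x'-h')`; its four points lie pairwise in common dyadic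
intervals of scales `j` and `j'`, so the mixed Hölder condition bounds it by `C 2^{-αj} 2^{-αj'}`.
-/

lemma preimage_sub_preimage_add {E : Type*} [AddGroup E] (c : E) (s : Set E) :
    (· - c) ⁻¹' ((· + c) ⁻¹' s) = s := by
  ext p; simp

section Translation

variable {E F : Type*} [MeasurableSpace E] [AddGroup E] [MeasurableAdd E]
  [NormedAddCommGroup F] {μ : Measure E} [μ.IsAddRightInvariant]

lemma setIntegral_preimage_add_right [NormedSpace ℝ F] (G : E → F) (c : E) (s : Set E) :
    ∫ p in (· + c) ⁻¹' s, G p ∂μ = ∫ p in s, G (p - c) ∂μ := by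
  conv_rhs => rw [← preimage_sub_preimage_add c s]
  exact ((measurePreserving_sub_right μ c).setIntegral_preimage_emb
    (measurableEmbedding_subRight c) G _).symm

lemma integrableOn_comp_sub_right {G : E → F} {c : E} {s : Set E}
    (hG : IntegrableOn G ((· + c) ⁻¹' s) μ) : IntegrableOn (fun p => G (p - c)) s μ := by
  rw [← preimage_sub_preimage_add c s]
  exact (measurePreserving_sub_right μ c).integrableOn_comp_preimage
    (measurableEmbedding_subRight c) |>.2 hG

lemma setIntegral_union_preimage_add_sign_mul [NormedSpace ℝ F] {A B : Set E} {c : E}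
    {ψ : E → ℝ} {G : E → F}
    (hA : A = (· + c) ⁻¹' B) (hAB : Disjoint A B) (hB : MeasurableSet B)
    (hψA : ∀ p ∈ A, ψ p = -1) (hψB : ∀ p ∈ B, ψ p = 1) (hG : IntegrableOn G (A ∪ B) μ) :
    ∫ p in A ∪ B, ψ p • G p ∂μ = ∫ p in B, (G p - G (p - c)) ∂μ := by
  have hAm : MeasurableSet A := hA ▸ hB.preimage (measurable_add_const c)
  have hGA : IntegrableOn G A μ := hG.mono_set Set.subset_union_left
  have hGB : IntegrableOn G B μ := hG.mono_set Set.subset_union_right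
  have hψGA : ∫ p in A, ψ p • G p ∂μ = -∫ p in A, G p ∂μ := by
    rw [← integral_neg]
    exact setIntegral_congr_fun hAm fun p hp => by simp [hψA p hp]
  have hψGB : ∫ p in B, ψ p • G p ∂μ = ∫ p in B, G p ∂μ :=
    setIntegral_congr_fun hB fun p hp => by simp [hψB p hp]
  have hshift : ∫ p in A, G p ∂μ = ∫ p in B, G (p - c) ∂μ := by
    rw [hA, setIntegral_preimage_add_right]
  rw [setIntegral_union hAB hB ((hGA.neg).congr_fun (fun p hp => by simp [hψA p hp]) hAm)
      (hGB.congr_fun (fun p hp => by simp [hψB p hp]) hB), hψGA, hψGB, hshift,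
    integral_sub hGB (integrableOn_comp_sub_right (hA ▸ hGA))]
  abel

end Translation

lemma two_zpow_neg_eq_two_mul (j : ℕ) : (2:ℝ) ^ (-(j:ℤ)) = 2 * 2 ^ (-(j:ℤ) - 1) := by
  rw [zpow_sub_one₀ two_ne_zero]; ring

lemma two_zpow_neg_mul_add_one (j : ℕ) (k : ℤ) :
    (2:ℝ) ^ (-(j:ℤ)) * (k + 1) = 2 ^ (-(j:ℤ)) * k + 2 ^ (-(j:ℤ) - 1) + 2 ^ (-(j:ℤ) - 1) := by
  rw [two_zpow_neg_eq_two_mul]; ring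

lemma two_zpow_neg_rpow (α : ℝ) (j : ℕ) : ((2:ℝ) ^ (-(j:ℤ))) ^ α = 2 ^ (-(α * j)) := by
  rw [← Real.rpow_intCast, ← Real.rpow_mul zero_le_two]
  push_cast; ring_nf

noncomputable def dyadicLeftHalf (j : ℕ) (k : ℤ) : Set ℝ :=
  Set.Ioc (2 ^ (-(j:ℤ)) * k) (2 ^ (-(j:ℤ)) * k + 2 ^ (-(j:ℤ) - 1))

noncomputable def dyadicRightHalf (j : ℕ) (k : ℤ) : Set ℝ :=
  Set.Ioc (2 ^ (-(j:ℤ)) * k + 2 ^ (-(j:ℤ) - 1)) (2 ^ (-(j:ℤ)) * (k + 1))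

section DyadicHalves

variable {j : ℕ} {k : ℤ}

lemma dyadicLeftHalf_union_dyadicRightHalf :
    dyadicLeftHalf j k ∪ dyadicRightHalf j k = dyadicInterval j k := by
  rw [dyadicLeftHalf, dyadicRightHalf, dyadicInterval, two_zpow_neg_mul_add_one]
  have h : (0:ℝ) ≤ 2 ^ (-(j:ℤ) - 1) := by positivity
  exact Set.Ioc_union_Ioc_eq_Ioc (le_add_of_nonneg_right h) (le_add_of_nonneg_right h)

lemma dyadicLeftHalf_eq_preimage :
    dyadicLeftHalf j k = (· + 2 ^ (-(j:ℤ) - 1)) ⁻¹' dyadicRightHalf j k := by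
  rw [dyadicRightHalf, Set.preimage_add_const_Ioc, dyadicLeftHalf, two_zpow_neg_eq_two_mul j]
  congr 1 <;> ring

lemma disjoint_dyadicLeftHalf_dyadicRightHalf :
    Disjoint (dyadicLeftHalf j k) (dyadicRightHalf j k) :=
  Set.Ioc_disjoint_Ioc_of_le le_rfl

lemma dyadicLeftHalf_subset : dyadicLeftHalf j k ⊆ dyadicInterval j k :=
  dyadicLeftHalf_union_dyadicRightHalf ▸ Set.subset_union_left

lemma dyadicRightHalf_subset : dyadicRightHalf j k ⊆ dyadicInterval j k :=
  dyadicLeftHalf_union_dyadicRightHalf ▸ Set.subset_union_right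

lemma sub_mem_dyadicLeftHalf {x : ℝ} (hx : x ∈ dyadicRightHalf j k) :
    x - 2 ^ (-(j:ℤ) - 1) ∈ dyadicLeftHalf j k := by
  rw [dyadicLeftHalf_eq_preimage]; simpa using hx

lemma volume_real_dyadicRightHalf : volume.real (dyadicRightHalf j k) = 2 ^ (-(j:ℤ) - 1) := by
  rw [dyadicRightHalf, two_zpow_neg_mul_add_one, Real.volume_real_Ioc_of_le (by simp; positivity)]
  ring

lemma measurableSet_dyadicInterval : MeasurableSet (dyadicInterval j k) := measurableSet_Ioc

lemma measurableSet_dyadicRightHalf : MeasurableSet (dyadicRightHalf j k) := measurableSet_Ioc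

variable {x : ℝ}

lemma haarFn_of_mem_dyadicRightHalf (hx : x ∈ dyadicRightHalf j k) : haarFn j k x = 1 :=
  if_pos hx

lemma haarFn_of_mem_dyadicLeftHalf (hx : x ∈ dyadicLeftHalf j k) : haarFn j k x = -1 :=
  (if_neg (Set.disjoint_left.1 disjoint_dyadicLeftHalf_dyadicRightHalf hx)).trans (if_pos hx)

lemma haarFn_of_notMem_dyadicInterval (hx : x ∉ dyadicInterval j k) : haarFn j k x = 0 := by
  rw [← dyadicLeftHalf_union_dyadicRightHalf, Set.mem_union, not_or] at hx
  exact (if_neg hx.2).trans (if_neg hx.1)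

lemma abs_haarFn_le_one (j : ℕ) (k : ℤ) (x : ℝ) : |haarFn j k x| ≤ 1 := by
  unfold haarFn; split_ifs <;> simp

lemma measurable_haarFn (j : ℕ) (k : ℤ) : Measurable (haarFn j k) :=
  Measurable.ite measurableSet_Ioc measurable_const
    (Measurable.ite measurableSet_Ioc measurable_const measurable_const)

end DyadicHalves

section DyadicDist

lemma dyadicIndex_of_mem_dyadicInterval {j : ℕ} {k : ℤ} {x : ℝ} (hx : x ∈ dyadicInterval j k) :
    dyadicIndex j x = k := by
  have h2 : (0:ℝ) < 2 ^ j := by positivity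
  rw [dyadicInterval, zpow_neg, zpow_natCast, Set.mem_Ioc, ← div_eq_inv_mul, ← div_eq_inv_mul,
    div_lt_iff₀' h2, le_div_iff₀' h2] at hx
  rw [dyadicIndex, sub_eq_iff_eq_add, Int.ceil_eq_iff]
  push_cast
  constructor <;> linarith [hx.1, hx.2]

lemma dyadicDist_nonneg (x y : ℝ) : 0 ≤ dyadicDist x y := by
  unfold dyadicDist
  split_ifs
  · exact le_rfl
  · exact Real.sInf_nonneg (by rintro r ⟨m, rfl, -⟩; positivity)

lemma dyadicDist_le_of_dyadicIndex_eq {j : ℕ} {x y : ℝ} (h : dyadicIndex j x = dyadicIndex j y) :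
    dyadicDist x y ≤ 2 ^ (-(j:ℤ)) := by
  unfold dyadicDist
  split_ifs
  · positivity
  · exact csInf_le ⟨0, by rintro r ⟨m, rfl, -⟩; positivity⟩ ⟨j, rfl, h⟩

lemma dyadicDist_rpow_le_of_mem {α : ℝ} (hα : 0 ≤ α) {j : ℕ} {k : ℤ} {x y : ℝ}
    (hx : x ∈ dyadicInterval j k) (hy : y ∈ dyadicInterval j k) :
    dyadicDist x y ^ α ≤ 2 ^ (-(α * j)) := by
  rw [← two_zpow_neg_rpow]
  refine Real.rpow_le_rpow (dyadicDist_nonneg x y) (dyadicDist_le_of_dyadicIndex_eq ?_) hα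
  rw [dyadicIndex_of_mem_dyadicInterval hx, dyadicIndex_of_mem_dyadicInterval hy]

end DyadicDist

lemma dyadicInterval_subset_Ioc_zero_one {j k : ℕ} (hk : k < 2 ^ j) :
    dyadicInterval j k ⊆ Set.Ioc 0 1 := by
  have hk1 : (k:ℝ) + 1 ≤ 2 ^ j := by exact_mod_cast hk
  refine Set.Ioc_subset_Ioc (by positivity) ?_
  calc (2:ℝ) ^ (-(j:ℤ)) * ((k:ℤ) + 1) ≤ 2 ^ (-(j:ℤ)) * 2 ^ j := by
        push_cast; gcongr
    _ = 1 := by rw [zpow_neg, zpow_natCast, inv_mul_cancel₀ (by positivity)]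

section HaarIntegral

variable {j : ℕ} {k : ℤ}

lemma dyadicLeftHalf_prod_eq_preimage (t : Set ℝ) :
    dyadicLeftHalf j k ×ˢ t = (· + ((2:ℝ) ^ (-(j:ℤ) - 1), 0)) ⁻¹' (dyadicRightHalf j k ×ˢ t) := by
  ext p; simp [dyadicLeftHalf_eq_preimage]

lemma prod_dyadicLeftHalf_eq_preimage (s : Set ℝ) :
    s ×ˢ dyadicLeftHalf j k = (· + (0, (2:ℝ) ^ (-(j:ℤ) - 1))) ⁻¹' (s ×ˢ dyadicRightHalf j k) := by
  ext p; simp [dyadicLeftHalf_eq_preimage]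

lemma MeasureTheory.IntegrableOn.comp_sub_fst_dyadicRightHalf {G : ℝ × ℝ → ℝ} {t : Set ℝ}
    (hG : IntegrableOn G (dyadicLeftHalf j k ×ˢ t)) :
    IntegrableOn (fun p => G (p.1 - 2 ^ (-(j:ℤ) - 1), p.2)) (dyadicRightHalf j k ×ˢ t) := by
  rw [dyadicLeftHalf_prod_eq_preimage] at hG
  simpa only [Prod.sub_def, sub_zero] using integrableOn_comp_sub_right hG

lemma setIntegral_dyadicInterval_prod_haarFn_mul {G : ℝ × ℝ → ℝ} {t : Set ℝ}
    (ht : MeasurableSet t) (hG : IntegrableOn G (dyadicInterval j k ×ˢ t)) :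
    ∫ p in dyadicInterval j k ×ˢ t, haarFn j k p.1 * G p
      = ∫ p in dyadicRightHalf j k ×ˢ t, (G p - G (p.1 - 2 ^ (-(j:ℤ) - 1), p.2)) := by
  rw [← dyadicLeftHalf_union_dyadicRightHalf, Set.union_prod] at hG ⊢
  simpa only [smul_eq_mul, Prod.sub_def, sub_zero] using setIntegral_union_preimage_add_sign_mul
    (dyadicLeftHalf_prod_eq_preimage t)
    (Set.disjoint_prod.2 (Or.inl disjoint_dyadicLeftHalf_dyadicRightHalf))
    (measurableSet_dyadicRightHalf.prod ht) (fun p hp => haarFn_of_mem_dyadicLeftHalf hp.1)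
    (fun p hp => haarFn_of_mem_dyadicRightHalf hp.1) hG

lemma setIntegral_prod_dyadicInterval_haarFn_mul {G : ℝ × ℝ → ℝ} {s : Set ℝ}
    (hs : MeasurableSet s) (hG : IntegrableOn G (s ×ˢ dyadicInterval j k)) :
    ∫ p in s ×ˢ dyadicInterval j k, haarFn j k p.2 * G p
      = ∫ p in s ×ˢ dyadicRightHalf j k, (G p - G (p.1, p.2 - 2 ^ (-(j:ℤ) - 1))) := by
  rw [← dyadicLeftHalf_union_dyadicRightHalf, Set.prod_union] at hG ⊢
  simpa only [smul_eq_mul, Prod.sub_def, sub_zero] using setIntegral_union_preimage_add_sign_mul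
    (prod_dyadicLeftHalf_eq_preimage s)
    (Set.disjoint_prod.2 (Or.inr disjoint_dyadicLeftHalf_dyadicRightHalf))
    (hs.prod measurableSet_dyadicRightHalf) (fun p hp => haarFn_of_mem_dyadicLeftHalf hp.2)
    (fun p hp => haarFn_of_mem_dyadicRightHalf hp.2) hG

lemma MeasureTheory.IntegrableOn.haarFn_comp_mul {X : Type*} [MeasurableSpace X]
    {μ : Measure X} {s : Set X} {G φ : X → ℝ} (hG : IntegrableOn G s μ) (hφ : Measurable φ) :
    IntegrableOn (fun p => haarFn j k (φ p) * G p) s μ :=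
  hG.bdd_mul ((measurable_haarFn j k).comp hφ).aestronglyMeasurable
    (ae_of_all _ fun p => abs_haarFn_le_one j k (φ p))

lemma setIntegral_mul_haarFn_mul_haarFn_eq_dyadicInterval_prod {F : ℝ × ℝ → ℝ} {j' : ℕ} {k' : ℤ}
    {s t : Set ℝ} (hs : MeasurableSet s) (ht : MeasurableSet t)
    (hIs : dyadicInterval j k ⊆ s) (hIt : dyadicInterval j' k' ⊆ t) :
    ∫ p in s ×ˢ t, F p * haarFn j k p.1 * haarFn j' k' p.2
      = ∫ p in dyadicInterval j k ×ˢ dyadicInterval j' k',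
          F p * haarFn j k p.1 * haarFn j' k' p.2 := by
  refine setIntegral_eq_of_subset_of_forall_sdiff_eq_zero (hs.prod ht)
    (Set.prod_mono hIs hIt) fun p ⟨_, hp⟩ => ?_
  rcases not_and_or.1 hp with hp | hp
  · simp [haarFn_of_notMem_dyadicInterval hp]
  · simp [haarFn_of_notMem_dyadicInterval hp]

lemma setIntegral_dyadicInterval_prod_mul_haarFn_mul_haarFn {f : ℝ → ℝ → ℝ} {j' : ℕ} {k' : ℤ}
    (hf : IntegrableOn (Function.uncurry f) (dyadicInterval j k ×ˢ dyadicInterval j' k')) :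
    ∫ p in dyadicInterval j k ×ˢ dyadicInterval j' k', f p.1 p.2 * haarFn j k p.1 * haarFn j' k' p.2
      = ∫ p in dyadicRightHalf j k ×ˢ dyadicRightHalf j' k',
          (f p.1 p.2 - f (p.1 - 2 ^ (-(j:ℤ) - 1)) p.2 - f p.1 (p.2 - 2 ^ (-(j':ℤ) - 1))
            + f (p.1 - 2 ^ (-(j:ℤ) - 1)) (p.2 - 2 ^ (-(j':ℤ) - 1))) := by
  have hfL := hf.mono_set (Set.prod_mono dyadicLeftHalf_subset le_rfl)
  have hfR := hf.mono_set (Set.prod_mono dyadicRightHalf_subset le_rfl)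
  have hcomm : ∀ p : ℝ × ℝ, f p.1 p.2 * haarFn j k p.1 * haarFn j' k' p.2
      = haarFn j k p.1 * (haarFn j' k' p.2 * f p.1 p.2) := fun p => by ring
  simp_rw [hcomm]
  rw [setIntegral_dyadicInterval_prod_haarFn_mul (G := fun p => haarFn j' k' p.2 * f p.1 p.2)
    measurableSet_dyadicInterval (hf.haarFn_comp_mul measurable_snd)]
  simp_rw [← mul_sub]
  rw [setIntegral_prod_dyadicInterval_haarFn_mul
    (G := fun p => f p.1 p.2 - f (p.1 - 2 ^ (-(j:ℤ) - 1)) p.2)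
    measurableSet_dyadicRightHalf (hfR.sub hfL.comp_sub_fst_dyadicRightHalf)]
  simp_rw [sub_add]

lemma abs_setIntegral_dyadicRightHalf_prod_le {g : ℝ × ℝ → ℝ} {M : ℝ} {j' : ℕ} {k' : ℤ}
    (hg : ∀ p ∈ dyadicRightHalf j k ×ˢ dyadicRightHalf j' k', |g p| ≤ M) :
    |∫ p in dyadicRightHalf j k ×ˢ dyadicRightHalf j' k', g p|
      ≤ M * 2 ^ (-(j:ℤ) - 1) * 2 ^ (-(j':ℤ) - 1) := by
  have hfinite : volume (dyadicRightHalf j k ×ˢ dyadicRightHalf j' k') < ⊤ :=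
    (Metric.isBounded_Ioc _ _).prod (Metric.isBounded_Ioc _ _) |>.measure_lt_top
  have hvol : volume.real (dyadicRightHalf j k ×ˢ dyadicRightHalf j' k')
      = 2 ^ (-(j:ℤ) - 1) * 2 ^ (-(j':ℤ) - 1) := by
    rw [Measure.volume_eq_prod, measureReal_prod_prod, volume_real_dyadicRightHalf,
      volume_real_dyadicRightHalf]
  rw [mul_assoc, ← hvol]
  exact norm_setIntegral_le_of_norm_le_const (f := g) hfinite hg

end HaarIntegral

lemma MixedHolderDyadic.abs_sub_sub_add_le {α C : ℝ} {f : ℝ → ℝ → ℝ}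
    (hf : MixedHolderDyadic α C f) (hα : 0 ≤ α) (hC : 0 ≤ C) {j j' : ℕ} {k k' : ℤ}
    (hI : dyadicInterval j k ⊆ Set.Ioc 0 1) (hI' : dyadicInterval j' k' ⊆ Set.Ioc 0 1)
    {x y x' y' : ℝ} (hx : x ∈ dyadicInterval j k) (hy : y ∈ dyadicInterval j k)
    (hx' : x' ∈ dyadicInterval j' k') (hy' : y' ∈ dyadicInterval j' k') :
    |f y y' - f x y' - f y x' + f x x'| ≤ C * 2 ^ (-(α * j)) * 2 ^ (-(α * j')) := by
  calc _ ≤ C * (dyadicDist x y ^ α * dyadicDist x' y' ^ α) :=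
        (hf x (hI hx) y (hI hy) x' (hI' hx') y' (hI' hy')).2.2
    _ ≤ C * (2 ^ (-(α * j)) * 2 ^ (-(α * j'))) :=
        mul_le_mul_of_nonneg_left (mul_le_mul (dyadicDist_rpow_le_of_mem hα hx hy)
          (dyadicDist_rpow_le_of_mem hα hx' hy')
          (Real.rpow_nonneg (dyadicDist_nonneg x' y') α) (by positivity)) hC
    _ = _ := by ring

/-- Tensor Haar coefficient decay: for `f` integrable and mixed `α`-Hölder
with constant `C`, `|∫_{(0,1]²} f ψ^{j,j'}_{k,k'}| ≤ C 2^{-αj} 2^{-αj'} 2^{-(j+1)} 2^{-(j'+1)}`. -/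
theorem tensor_haar_coefficient_decay
    (α C : ℝ) (hα : 0 < α) (hC : 0 < C)
    (f : ℝ → ℝ → ℝ)
    (hint : MeasureTheory.IntegrableOn (Function.uncurry f)
      (Set.Ioc (0:ℝ) 1 ×ˢ Set.Ioc (0:ℝ) 1))
    (hf : MixedHolderDyadic α C f)
    (j j' : ℕ) (k k' : ℕ) (hk : k < 2 ^ j) (hk' : k' < 2 ^ j') :
    |∫ p in Set.Ioc (0:ℝ) 1 ×ˢ Set.Ioc (0:ℝ) 1,
        f p.1 p.2 * haarFn j (k:ℤ) p.1 * haarFn j' (k':ℤ) p.2|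
      ≤ C * (2:ℝ) ^ (-(α * (j:ℝ))) * (2:ℝ) ^ (-(α * (j':ℝ)))
          * (2:ℝ) ^ (-(j:ℤ) - 1) * (2:ℝ) ^ (-(j':ℤ) - 1) := by
  have hI := dyadicInterval_subset_Ioc_zero_one hk
  have hI' := dyadicInterval_subset_Ioc_zero_one hk'
  rw [setIntegral_mul_haarFn_mul_haarFn_eq_dyadicInterval_prod measurableSet_Ioc measurableSet_Ioc
      hI hI', setIntegral_dyadicInterval_prod_mul_haarFn_mul_haarFn
      (hint.mono_set (Set.prod_mono hI hI'))]
  exact abs_setIntegral_dyadicRightHalf_prod_le fun p ⟨hx, hx'⟩ =>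
    hf.abs_sub_sub_add_le hα.le hC.le hI hI'
      (dyadicLeftHalf_subset (sub_mem_dyadicLeftHalf hx)) (dyadicRightHalf_subset hx)
      (dyadicLeftHalf_subset (sub_mem_dyadicLeftHalf hx')) (dyadicRightHalf_subset hx')
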